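/- arXiv:1804.05718 — 5 statements merged into one kernel-verified Lean document; each statement's English description precedes it below -/
import Mathlib

section
/- Suppose E[t_e²] < ∞, d ≥ 2, and μ({0}) < p_c(d). Then there is a constant C > 0 such that for all n ≥ 1, |Var(T_n) − Var(F_n)| ≤ C·n^{3/4}. -/
/-!
Put `X_z = T(z, z + n e₁)`. The environment is i.i.d., so its law is invariant under lattice
translations and all `X_z` have the law of `T_n`. Expanding the square of the average
`F_n = N⁻¹ ∑_{z ∈ B_m} X_z` (with `N = #B_m`) then gives the exact identity
`Var(T_n) - Var(F_n) = (2 N²)⁻¹ ∑_{z, w ∈ B_m} E[(X_z - X_w)²]`.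
By the triangle inequality, `|X_z - X_w|` is at most the sum of four passage times between points
at `ℓ¹`-distance at most `2m`; each is dominated by the weight of a straight lattice path, whose
second moment is at most `(2m)² E[t_e²]`. Hence `0 ≤ Var(T_n) - Var(F_n) ≤ 32 m² E[t_e²]`, and
`m² ≤ 4 n^{1/2} ≤ 4 n^{3/4}`.
-/

open MeasureTheory ProbabilityTheory Real Filter
open scoped ENNReal

namespace FPP

/-- Vertices of the lattice `ℤ^d`. -/
abbrev Vertex (d : ℕ) := Fin d → ℤ

/-- Nearest-neighbor edges of `ℤ^d`: the edge `(v, i)` joins `v` and `v + eᵢ`. -/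
abbrev Edge (d : ℕ) := (Fin d → ℤ) × Fin d

/-- The `i`-th standard basis vector of `ℤ^d`. -/
def unitVec (d : ℕ) (i : Fin d) : Vertex d := fun j => if j = i then 1 else 0

/-- Take one step from `v` in direction `s.1`, forwards if `s.2 = true`, else backwards. -/
def step {d : ℕ} (v : Vertex d) (s : Fin d × Bool) : Vertex d :=
  if s.2 then v + unitVec d s.1 else v - unitVec d s.1

/-- The (undirected, canonically oriented) edge traversed by the step `s` from `v`. -/
def stepEdge {d : ℕ} (v : Vertex d) (s : Fin d × Bool) : Edge d :=
  if s.2 then (v, s.1) else (v - unitVec d s.1, s.1)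

/-- Endpoint of the lattice path started at `v` with steps `p`. -/
def pathEnd {d : ℕ} (v : Vertex d) : List (Fin d × Bool) → Vertex d
  | [] => v
  | s :: rest => pathEnd (step v s) rest

/-- The list of edges traversed by the lattice path started at `v` with steps `p`. -/
def pathEdges {d : ℕ} (v : Vertex d) : List (Fin d × Bool) → List (Edge d)
  | [] => []
  | s :: rest => stepEdge v s :: pathEdges (step v s) rest

/-- The list of vertices visited by the lattice path started at `v` with steps `p`. -/
def pathVertices {d : ℕ} (v : Vertex d) : List (Fin d × Bool) → List (Vertex d)
  | [] => [v]
  | s :: rest => v :: pathVertices (step v s) rest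

/-- The passage time of a lattice path: the sum of the weights of its edges. -/
def pathTime {d : ℕ} (t : Edge d → ℝ) (v : Vertex d) (p : List (Fin d × Bool)) : ℝ :=
  ((pathEdges v p).map t).sum

/-- The first-passage time `T(x,y)`: infimum over lattice paths from `x` to `y`
of the sum of the edge weights along the path. -/
noncomputable def passageTime {d : ℕ} (t : Edge d → ℝ) (x y : Vertex d) : ℝ :=
  sInf {r | ∃ p : List (Fin d × Bool), pathEnd x p = y ∧ pathTime t x p = r}

/-- The point `n·e₁ ∈ ℤ^d`. -/
def target (d n : ℕ) : Vertex d := fun j => if (j : ℕ) = 0 then (n : ℤ) else 0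

/-- The set of geodesics (time-minimizing lattice paths) from `x` to `y`. -/
noncomputable def geodesics {d : ℕ} (t : Edge d → ℝ) (x y : Vertex d) :
    Set (List (Fin d × Bool)) :=
  {p | pathEnd x p = y ∧ pathTime t x p = passageTime t x y}

/-- The intersection of (the edge sets of) all geodesics from `x` to `y`. -/
noncomputable def geoInter {d : ℕ} (t : Edge d → ℝ) (x y : Vertex d) : Set (Edge d) :=
  {e | ∀ p ∈ geodesics t x y, e ∈ pathEdges x p}

/-- The cluster of the origin in a bond percolation configuration `ω`:
all vertices joined to `0` by a path of open edges. -/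
def openCluster {d : ℕ} (ω : Edge d → Bool) : Set (Vertex d) :=
  {x | ∃ p : List (Fin d × Bool), pathEnd 0 p = x ∧ ∀ e ∈ pathEdges 0 p, ω e = true}

/-- The critical probability `p_c(d)` of i.i.d. Bernoulli bond percolation on `ℤ^d`:
the supremum of those `p ∈ [0,1]` such that for any i.i.d. Bernoulli(p) family of
edge variables, the open cluster of the origin is almost surely finite. -/
noncomputable def pc (d : ℕ) : ℝ :=
  sSup {p : ℝ | 0 ≤ p ∧ p ≤ 1 ∧
    ∀ (Ω : Type) (_ : MeasureSpace Ω), IsProbabilityMeasure (ℙ : Measure Ω) →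
      ∀ X : Edge d → Ω → Bool,
        iIndepFun X ℙ →
        (∀ e, ℙ {ω | X e ω = true} = ENNReal.ofReal p) →
        ℙ {ω | (openCluster fun e => X e ω).Infinite} = 0}

/-- The passage time `T_n = T(0, n e₁)` as a function of the environment. -/
noncomputable def Tn {d : ℕ} (t : Edge d → Ω → ℝ) (n : ℕ) (ω : Ω) : ℝ :=
  passageTime (fun e => t e ω) 0 (target d n)


/-- The ℓ¹-ball `B_m = {x ∈ ℤ^d : ‖x‖₁ ≤ m}`, as a finset. -/
noncomputable def ballOne (d m : ℕ) : Finset (Vertex d) :=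
  (Fintype.piFinset fun _ : Fin d => Finset.Icc (-(m : ℤ)) (m : ℤ)).filter
    (fun x => ∑ i, |x i| ≤ (m : ℤ))

/-- The averaged passage time
`F_n = (1/#B_m) ∑_{z ∈ B_m} T(z, z + n e₁)` with `m = ⌈n^{1/4}⌉`. -/
noncomputable def Fn {d : ℕ} {Ω : Type} (t : Edge d → Ω → ℝ) (n : ℕ) (ω : Ω) : ℝ :=
  ((ballOne d ⌈(n : ℝ) ^ (1 / 4 : ℝ)⌉₊).card : ℝ)⁻¹ *
    ∑ z ∈ ballOne d ⌈(n : ℝ) ^ (1 / 4 : ℝ)⌉₊,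
      passageTime (fun e => t e ω) z (z + target d n)

end FPP

open scoped Finset

theorem sum_sum_sub_sq {ι : Type*} (s : Finset ι) (x : ι → ℝ) :
    ∑ i ∈ s, ∑ j ∈ s, (x i - x j) ^ 2 = 2 * #s * ∑ i ∈ s, x i ^ 2 - 2 * (∑ i ∈ s, x i) ^ 2 := by
  have hexp : ∀ i j, (x i - x j) ^ 2 = x i ^ 2 + x j ^ 2 - 2 * (x i * x j) := fun i j => by ring
  simp only [hexp, Finset.sum_add_distrib, Finset.sum_sub_distrib, Finset.sum_const, nsmul_eq_mul,
    ← Finset.mul_sum, ← Finset.sum_mul]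
  ring

section
variable {Ω ι : Type*} {mΩ : MeasurableSpace Ω} {P : Measure Ω}

theorem integral_sq_sum_le (s : Finset ι) {X : ι → Ω → ℝ} (hX : ∀ i ∈ s, MemLp (X i) 2 P)
    {σ2 : ℝ} (hσ : ∀ i ∈ s, ∫ ω, X i ω ^ 2 ∂P ≤ σ2) :
    ∫ ω, (∑ i ∈ s, X i ω) ^ 2 ∂P ≤ (#s : ℝ) ^ 2 * σ2 := by
  calc ∫ ω, (∑ i ∈ s, X i ω) ^ 2 ∂P
      ≤ ∫ ω, (#s : ℝ) * ∑ i ∈ s, X i ω ^ 2 ∂P := by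
        refine integral_mono ?_ ?_ fun ω => sq_sum_le_card_mul_sum_sq
        · exact (memLp_finsetSum s hX).integrable_sq
        · exact (integrable_finsetSum s fun i hi => (hX i hi).integrable_sq).const_mul _
    _ = (#s : ℝ) * ∑ i ∈ s, ∫ ω, X i ω ^ 2 ∂P := by
        rw [integral_const_mul, integral_finsetSum s fun i hi => (hX i hi).integrable_sq]
    _ ≤ (#s : ℝ) * ∑ _i ∈ s, σ2 := by gcongr with i hi; exact hσ i hi
    _ = (#s : ℝ) ^ 2 * σ2 := by rw [Finset.sum_const, nsmul_eq_mul]; ring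

theorem ae_forall_nonneg_of_map_eq [Countable ι] {X : ι → Ω → ℝ} {ν : Measure ℝ}
    (hX : ∀ i, Measurable (X i)) (hXν : ∀ i, P.map (X i) = ν) (hν : ν (Set.Iio 0) = 0) :
    ∀ᵐ ω ∂P, ∀ i, 0 ≤ X i ω := by
  refine ae_all_iff.2 fun i => ?_
  have : P (X i ⁻¹' Set.Iio 0) = 0 := by
    rw [← Measure.map_apply (hX i) measurableSet_Iio, hXν, hν]
  filter_upwards [measure_eq_zero_iff_ae_notMem.1 this] with ω hω
  simpa using hω

theorem identDistrib_pi_of_iIndepFun {Ω' β : Type*} {mΩ' : MeasurableSpace Ω'}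
    [MeasurableSpace β] {P' : Measure Ω'} {X : ι → Ω → β} {Y : ι → Ω' → β} {ν : Measure β}
    (hX : ∀ i, Measurable (X i)) (hY : ∀ i, Measurable (Y i)) (hXi : iIndepFun X P)
    (hYi : iIndepFun Y P') (hXν : ∀ i, P.map (X i) = ν) (hYν : ∀ i, P'.map (Y i) = ν) :
    IdentDistrib (fun ω i => X i ω) (fun ω i => Y i ω) P P' where
  aemeasurable_fst := (measurable_pi_lambda _ hX).aemeasurable
  aemeasurable_snd := (measurable_pi_lambda _ hY).aemeasurable
  map_eq := by
    rw [hXi.map_fun_eq_infinitePi_map hX, hYi.map_fun_eq_infinitePi_map hY]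
    simp only [hXν, hYν]

variable [IsProbabilityMeasure P]

theorem variance_sub_variance_average {s : Finset ι} (hs : s.Nonempty) {X : ι → Ω → ℝ}
    {Y : Ω → ℝ} (hX : ∀ i ∈ s, MemLp (X i) 2 P) (hXY : ∀ i ∈ s, IdentDistrib (X i) Y P P) :
    variance Y P - variance (fun ω => (#s : ℝ)⁻¹ * ∑ i ∈ s, X i ω) P
      = (2 * (#s : ℝ) ^ 2)⁻¹ * ∑ i ∈ s, ∑ j ∈ s, ∫ ω, (X i ω - X j ω) ^ 2 ∂P := by
  obtain ⟨i₀, hi₀⟩ := hs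
  have hN : (#s : ℝ) ≠ 0 := by exact_mod_cast (Finset.card_pos.2 ⟨i₀, hi₀⟩).ne'
  have hY : MemLp Y 2 P := (hXY i₀ hi₀).memLp_iff.1 (hX i₀ hi₀)
  have havg : MemLp (fun ω => (#s : ℝ)⁻¹ * ∑ i ∈ s, X i ω) 2 P :=
    (memLp_finsetSum s hX).const_mul _
  have hmean : ∫ ω, (#s : ℝ)⁻¹ * ∑ i ∈ s, X i ω ∂P = ∫ ω, Y ω ∂P := by
    rw [integral_const_mul, integral_finsetSum s fun i hi => (hX i hi).integrable one_le_two,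
      Finset.sum_congr rfl fun i hi => (hXY i hi).integral_eq, Finset.sum_const, nsmul_eq_mul,
      inv_mul_cancel_left₀ hN]
  have hsq : ∫ ω, ((#s : ℝ)⁻¹ * ∑ i ∈ s, X i ω) ^ 2 ∂P = ∫ ω, Y ω ^ 2 ∂P
      - (2 * (#s : ℝ) ^ 2)⁻¹ * ∑ i ∈ s, ∑ j ∈ s, ∫ ω, (X i ω - X j ω) ^ 2 ∂P := by
    have hdiff : ∀ i ∈ s, ∀ j ∈ s, Integrable (fun ω => (X i ω - X j ω) ^ 2) P :=
      fun i hi j hj => ((hX i hi).sub (hX j hj)).integrable_sq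
    have hpt : ∀ ω, ((#s : ℝ)⁻¹ * ∑ i ∈ s, X i ω) ^ 2 = (#s : ℝ)⁻¹ * ∑ i ∈ s, X i ω ^ 2
        - (2 * (#s : ℝ) ^ 2)⁻¹ * ∑ i ∈ s, ∑ j ∈ s, (X i ω - X j ω) ^ 2 := by
      intro ω
      rw [sum_sum_sub_sq]
      field_simp
      ring
    have hXsq : ∀ i ∈ s, ∫ ω, X i ω ^ 2 ∂P = ∫ ω, Y ω ^ 2 ∂P := fun i hi =>
      ((hXY i hi).comp (measurable_id.pow_const 2)).integral_eq
    have hsum : ∫ ω, ∑ i ∈ s, ∑ j ∈ s, (X i ω - X j ω) ^ 2 ∂P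
        = ∑ i ∈ s, ∑ j ∈ s, ∫ ω, (X i ω - X j ω) ^ 2 ∂P := by
      rw [integral_finsetSum s fun i hi => integrable_finsetSum s (hdiff i hi)]
      exact Finset.sum_congr rfl fun i hi => integral_finsetSum s (hdiff i hi)
    rw [integral_congr_ae (Eventually.of_forall hpt), integral_sub, integral_const_mul,
      integral_const_mul, integral_finsetSum s fun i hi => (hX i hi).integrable_sq,
      Finset.sum_congr rfl hXsq, hsum, Finset.sum_const, nsmul_eq_mul, inv_mul_cancel_left₀ hN]
    · exact (integrable_finsetSum s fun i hi => (hX i hi).integrable_sq).const_mul _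
    · exact (integrable_finsetSum s fun i hi => integrable_finsetSum s (hdiff i hi)).const_mul _
  rw [variance_eq_sub hY, variance_eq_sub havg]
  simp only [Pi.pow_apply]
  rw [hmean, hsq]
  ring

theorem abs_variance_sub_variance_average_le {s : Finset ι} (hs : s.Nonempty) {X : ι → Ω → ℝ}
    {Y : Ω → ℝ} (hX : ∀ i ∈ s, MemLp (X i) 2 P) (hXY : ∀ i ∈ s, IdentDistrib (X i) Y P P)
    {K : ℝ} (hK : ∀ i ∈ s, ∀ j ∈ s, ∫ ω, (X i ω - X j ω) ^ 2 ∂P ≤ K) :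
    |variance Y P - variance (fun ω => (#s : ℝ)⁻¹ * ∑ i ∈ s, X i ω) P| ≤ K / 2 := by
  have hN : (0 : ℝ) < #s := by exact_mod_cast hs.card_pos
  have hsum : ∑ i ∈ s, ∑ j ∈ s, ∫ ω, (X i ω - X j ω) ^ 2 ∂P ≤ #s ^ 2 * K :=
    calc _ ≤ ∑ _i ∈ s, ∑ _j ∈ s, K := Finset.sum_le_sum fun i hi => Finset.sum_le_sum (hK i hi)
      _ = #s ^ 2 * K := by simp only [Finset.sum_const, nsmul_eq_mul]; ring
  rw [variance_sub_variance_average hs hX hXY, abs_of_nonneg (mul_nonneg (by positivity)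
    (Finset.sum_nonneg fun i _ => Finset.sum_nonneg fun j _ =>
      integral_nonneg fun ω => sq_nonneg _))]
  calc _ ≤ (2 * (#s : ℝ) ^ 2)⁻¹ * (#s ^ 2 * K) := by gcongr
    _ = K / 2 := by field_simp

end

theorem natCeil_rpow_quarter_sq_le {n : ℕ} (hn : 1 ≤ n) :
    (⌈(n : ℝ) ^ (1 / 4 : ℝ)⌉₊ : ℝ) ^ 2 ≤ 4 * (n : ℝ) ^ (3 / 4 : ℝ) := by
  have hn' : (1 : ℝ) ≤ n := by exact_mod_cast hn
  set x := (n : ℝ) ^ (1 / 4 : ℝ)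
  have hx : 1 ≤ x := Real.one_le_rpow hn' (by norm_num)
  have hceil : (⌈x⌉₊ : ℝ) ≤ 2 * x := (Nat.ceil_lt_add_one (by positivity)).le.trans (by linarith)
  have hx2 : x ^ 2 ≤ (n : ℝ) ^ (3 / 4 : ℝ) := by
    rw [← Real.rpow_natCast, ← Real.rpow_mul (by positivity)]
    exact Real.rpow_le_rpow_of_exponent_le hn' (by norm_num)
  nlinarith [Nat.cast_nonneg (α := ℝ) ⌈x⌉₊]

namespace FPP

section LatticePaths

variable {d : ℕ}

def edgeShift (z : Vertex d) (e : Edge d) : Edge d := (e.1 + z, e.2)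

theorem edgeShift_injective (z : Vertex d) : Function.Injective (edgeShift z) := by
  rintro ⟨u, i⟩ ⟨v, j⟩ h
  simpa [edgeShift] using h

theorem step_add (v z : Vertex d) (s : Fin d × Bool) : step (v + z) s = step v s + z := by
  rcases s with ⟨i, _ | _⟩ <;> simp only [step, Bool.false_eq_true, if_false, if_true] <;> abel

theorem stepEdge_add (v z : Vertex d) (s : Fin d × Bool) :
    stepEdge (v + z) s = edgeShift z (stepEdge v s) := by
  rcases s with ⟨i, _ | _⟩ <;> simp [stepEdge, edgeShift, sub_add_eq_add_sub]

theorem pathEnd_add (v z : Vertex d) (p : List (Fin d × Bool)) :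
    pathEnd (v + z) p = pathEnd v p + z := by
  induction p generalizing v with
  | nil => rfl
  | cons s p ih => simp only [pathEnd, step_add, ih]

theorem pathEdges_add (v z : Vertex d) (p : List (Fin d × Bool)) :
    pathEdges (v + z) p = (pathEdges v p).map (edgeShift z) := by
  induction p generalizing v with
  | nil => rfl
  | cons s p ih => simp only [pathEdges, stepEdge_add, step_add, ih, List.map_cons]

theorem pathTime_add (g : Edge d → ℝ) (v z : Vertex d) (p : List (Fin d × Bool)) :
    pathTime g (v + z) p = pathTime (fun e => g (edgeShift z e)) v p := by
  simp only [pathTime, pathEdges_add, List.map_map, Function.comp_def]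

theorem pathEnd_append (v : Vertex d) (p q : List (Fin d × Bool)) :
    pathEnd v (p ++ q) = pathEnd (pathEnd v p) q := by
  induction p generalizing v with
  | nil => rfl
  | cons s p ih => exact ih _

theorem pathEdges_append (v : Vertex d) (p q : List (Fin d × Bool)) :
    pathEdges v (p ++ q) = pathEdges v p ++ pathEdges (pathEnd v p) q := by
  induction p generalizing v with
  | nil => rfl
  | cons s p ih => simp only [List.cons_append, pathEdges, pathEnd, ih]

theorem pathTime_append (g : Edge d → ℝ) (v : Vertex d) (p q : List (Fin d × Bool)) :
    pathTime g v (p ++ q) = pathTime g v p + pathTime g (pathEnd v p) q := by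
  simp only [pathTime, pathEdges_append, List.map_append, List.sum_append]

theorem length_pathEdges (v : Vertex d) (p : List (Fin d × Bool)) :
    (pathEdges v p).length = p.length := by
  induction p generalizing v with
  | nil => rfl
  | cons s p ih => simp only [pathEdges, List.length_cons, ih]

theorem pathTime_eq_sum (g : Edge d → ℝ) (v : Vertex d) (p : List (Fin d × Bool)) :
    pathTime g v p = ∑ i : Fin (pathEdges v p).length, g (pathEdges v p)[i] :=
  (Fin.sum_univ_fun_getElem _ _).symm

def stepsTo (u : Vertex d) : List (Fin d × Bool) :=
  (List.finRange d).flatMap fun i => List.replicate (u i).natAbs (i, decide (0 ≤ u i))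

theorem pathEnd_replicate (v : Vertex d) (k : ℕ) (s : Fin d × Bool) :
    pathEnd v (List.replicate k s) = v + k • step 0 s := by
  induction k generalizing v with
  | zero => simp [pathEnd]
  | succ k ih =>
    rw [List.replicate_succ, pathEnd, ih, ← zero_add v, step_add, succ_nsmul']
    abel

theorem natAbs_smul_step_zero (i : Fin d) (a : ℤ) :
    a.natAbs • step 0 (i, decide (0 ≤ a)) = Pi.single i a := by
  ext j
  rw [← natCast_zsmul, Int.natCast_natAbs]
  rcases le_or_gt 0 a with ha | ha
  · by_cases hj : j = i <;> simp [step, unitVec, hj, ha, abs_of_nonneg ha]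
  · by_cases hj : j = i <;> simp [step, unitVec, hj, ha.not_ge, abs_of_neg ha]

theorem pathEnd_stepsTo (v u : Vertex d) : pathEnd v (stepsTo u) = v + u := by
  have hlist : ∀ (l : List (Fin d)) (v : Vertex d), pathEnd v
      (l.flatMap fun i => List.replicate (u i).natAbs (i, decide (0 ≤ u i)))
      = v + (l.map fun i => Pi.single i (u i)).sum := by
    intro l
    induction l with
    | nil => simp [pathEnd]
    | cons i l ih =>
      intro v
      rw [List.flatMap_cons, pathEnd_append, ih, pathEnd_replicate, natAbs_smul_step_zero,
        List.map_cons, List.sum_cons, add_assoc]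
  rw [stepsTo, hlist, ← Fin.sum_univ_def, Finset.univ_sum_single]

def l1Norm (u : Vertex d) : ℕ := ∑ i, (u i).natAbs

theorem length_stepsTo (u : Vertex d) : (stepsTo u).length = l1Norm u := by
  simp [stepsTo, l1Norm, List.length_flatMap, Fin.sum_univ_def]

theorem passageTime_eq_iInf (g : Edge d → ℝ) (x y : Vertex d) :
    passageTime g x y = ⨅ p : {p : List (Fin d × Bool) // pathEnd x p = y}, pathTime g x p := by
  rw [passageTime, iInf]
  congr 1
  ext r
  simp [eq_comm]

theorem measurable_passageTime (x y : Vertex d) :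
    Measurable fun g : Edge d → ℝ => passageTime g x y := by
  simp only [passageTime_eq_iInf, pathTime_eq_sum]
  fun_prop

section Nonneg

variable {g : Edge d → ℝ}

theorem pathTime_nonneg (hg : ∀ e, 0 ≤ g e) (x : Vertex d) (p : List (Fin d × Bool)) :
    0 ≤ pathTime g x p :=
  List.sum_nonneg fun r hr => by
    obtain ⟨e, -, rfl⟩ := List.mem_map.1 hr
    exact hg e

theorem passageTime_le_pathTime (hg : ∀ e, 0 ≤ g e) {x y : Vertex d} {p : List (Fin d × Bool)}
    (hp : pathEnd x p = y) : passageTime g x y ≤ pathTime g x p :=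
  csInf_le ⟨0, by rintro r ⟨q, -, rfl⟩; exact pathTime_nonneg hg x q⟩ ⟨p, hp, rfl⟩

theorem le_passageTime {x y : Vertex d} {a : ℝ}
    (h : ∀ p, pathEnd x p = y → a ≤ pathTime g x p) : a ≤ passageTime g x y :=
  le_csInf ⟨_, stepsTo (y - x), by rw [pathEnd_stepsTo, add_sub_cancel], rfl⟩
    (by rintro r ⟨p, hp, rfl⟩; exact h p hp)

theorem passageTime_nonneg (hg : ∀ e, 0 ≤ g e) (x y : Vertex d) : 0 ≤ passageTime g x y :=
  le_passageTime fun p _ => pathTime_nonneg hg x p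

theorem passageTime_triangle (hg : ∀ e, 0 ≤ g e) (x y z : Vertex d) :
    passageTime g x z ≤ passageTime g x y + passageTime g y z := by
  rw [← sub_le_iff_le_add']
  refine le_passageTime fun q hq => ?_
  rw [sub_le_iff_le_add, ← sub_le_iff_le_add']
  refine le_passageTime fun p hp => ?_
  have := passageTime_le_pathTime hg (p := p ++ q) (by rw [pathEnd_append, hp, hq])
  rw [pathTime_append, hp] at this
  linarith

theorem abs_passageTime_sub_le (hg : ∀ e, 0 ≤ g e) (x x' y y' : Vertex d) :
    |passageTime g x x' - passageTime g y y'| ≤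
      passageTime g x y + passageTime g y x + passageTime g x' y' + passageTime g y' x' := by
  have h1 := passageTime_triangle hg x y x'
  have h2 := passageTime_triangle hg y y' x'
  have h3 := passageTime_triangle hg y x y'
  have h4 := passageTime_triangle hg x x' y'
  have := passageTime_nonneg hg
  rw [abs_le]
  constructor <;> linarith [this x y, this y x, this x' y', this y' x']

theorem passageTime_le_sum_stepsTo (hg : ∀ e, 0 ≤ g e) (x y : Vertex d) :
    passageTime g x y ≤ ∑ i : Fin (pathEdges x (stepsTo (y - x))).length,
      g (pathEdges x (stepsTo (y - x)))[i] := by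
  rw [← pathTime_eq_sum]
  exact passageTime_le_pathTime hg (by rw [pathEnd_stepsTo, add_sub_cancel])

end Nonneg

theorem passageTime_add_add (g : Edge d → ℝ) (x y z : Vertex d) :
    passageTime g (x + z) (y + z) = passageTime (fun e => g (edgeShift z e)) x y := by
  simp only [passageTime, pathEnd_add, add_left_inj, pathTime_add]

theorem l1Norm_sub_le_of_mem_ballOne {m : ℕ} {z w : Vertex d} (hz : z ∈ ballOne d m)
    (hw : w ∈ ballOne d m) : l1Norm (w - z) ≤ 2 * m := by
  simp only [ballOne, l1Norm, Finset.mem_filter] at hz hw ⊢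
  have : ∑ i, ((w - z) i).natAbs ≤ ∑ i, ((w i).natAbs + (z i).natAbs) :=
    Finset.sum_le_sum fun i _ => Int.natAbs_sub_le (w i) (z i)
  rw [Finset.sum_add_distrib] at this
  zify at this ⊢
  linarith [hz.2, hw.2]

theorem zero_mem_ballOne (m : ℕ) : (0 : Vertex d) ∈ ballOne d m := by
  simp [ballOne]

end LatticePaths

section PassageTimeMoments

variable {d : ℕ} {Ω : Type*} [MeasureSpace Ω] {t : Edge d → Ω → ℝ}

theorem memLp_passageTime (hmeas : ∀ e, Measurable (t e)) (ht0 : ∀ᵐ ω, ∀ e, 0 ≤ t e ω)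
    (ht2 : ∀ e, MemLp (t e) 2 ℙ) (x y : Vertex d) :
    MemLp (fun ω => passageTime (fun e => t e ω) x y) 2 ℙ := by
  set L := pathEdges x (stepsTo (y - x))
  have hS : MemLp (fun ω => ∑ i : Fin L.length, t L[i] ω) 2 ℙ :=
    memLp_finsetSum _ fun i _ => ht2 L[i]
  have hT : Measurable fun ω => passageTime (fun e => t e ω) x y :=
    (measurable_passageTime x y).comp (measurable_pi_lambda _ hmeas)
  refine hS.of_le hT.aestronglyMeasurable ?_
  filter_upwards [ht0] with ω hω
  rw [Real.norm_eq_abs, Real.norm_eq_abs, abs_of_nonneg (passageTime_nonneg hω x y)]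
  exact (passageTime_le_sum_stepsTo hω x y).trans (le_abs_self _)

theorem integral_sq_passageTime_le (hmeas : ∀ e, Measurable (t e))
    (ht0 : ∀ᵐ ω, ∀ e, 0 ≤ t e ω) (ht2 : ∀ e, MemLp (t e) 2 ℙ) {σ2 : ℝ}
    (hσ : ∀ e, ∫ ω, t e ω ^ 2 ≤ σ2) (x y : Vertex d) :
    ∫ ω, passageTime (fun e => t e ω) x y ^ 2 ≤ (l1Norm (y - x) : ℝ) ^ 2 * σ2 := by
  set L := pathEdges x (stepsTo (y - x))
  calc ∫ ω, passageTime (fun e => t e ω) x y ^ 2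
      ≤ ∫ ω, (∑ i : Fin L.length, t L[i] ω) ^ 2 := by
        refine integral_mono_ae (memLp_passageTime hmeas ht0 ht2 x y).integrable_sq ?_ ?_
        · exact (memLp_finsetSum _ fun i _ => ht2 L[i]).integrable_sq
        filter_upwards [ht0] with ω hω
        exact pow_le_pow_left₀ (passageTime_nonneg hω x y) (passageTime_le_sum_stepsTo hω x y) 2
    _ ≤ (Finset.univ : Finset (Fin L.length)).card ^ 2 * σ2 :=
        integral_sq_sum_le _ (fun i _ => ht2 L[i]) fun i _ => hσ L[i]
    _ = (l1Norm (y - x) : ℝ) ^ 2 * σ2 := by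
        rw [Finset.card_univ, Fintype.card_fin, length_pathEdges, length_stepsTo]

theorem integral_sq_sub_passageTime_le (hmeas : ∀ e, Measurable (t e))
    (ht0 : ∀ᵐ ω, ∀ e, 0 ≤ t e ω) (ht2 : ∀ e, MemLp (t e) 2 ℙ) {σ2 : ℝ}
    (hσ : ∀ e, ∫ ω, t e ω ^ 2 ≤ σ2) (x x' y y' : Vertex d) :
    ∫ ω, (passageTime (fun e => t e ω) x x' - passageTime (fun e => t e ω) y y') ^ 2
      ≤ 4 * ((l1Norm (y - x) : ℝ) ^ 2 + l1Norm (x - y) ^ 2 + l1Norm (y' - x') ^ 2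
        + l1Norm (x' - y') ^ 2) * σ2 := by
  set T := fun a b ω => passageTime (fun e => t e ω) a b
  have hT := memLp_passageTime hmeas ht0 ht2
  have hI : ∀ a b, Integrable (fun ω => T a b ω ^ 2) := fun a b => (hT a b).integrable_sq
  calc ∫ ω, (T x x' ω - T y y' ω) ^ 2
      ≤ ∫ ω, 4 * (T x y ω ^ 2 + T y x ω ^ 2 + T x' y' ω ^ 2 + T y' x' ω ^ 2) := by
        refine integral_mono_ae ((hT x x').sub (hT y y')).integrable_sq
          ((((hI x y).add (hI y x)).add (hI x' y')).add (hI y' x') |>.const_mul 4) ?_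
        filter_upwards [ht0] with ω hω
        have h := abs_passageTime_sub_le hω x x' y y'
        have h0 := passageTime_nonneg hω
        -- `(a + b + c + d) ^ 2 ≤ 4 * (a ^ 2 + b ^ 2 + c ^ 2 + d ^ 2)` for the four terms of `h`
        nlinarith [sq_abs (T x x' ω - T y y' ω), abs_nonneg (T x x' ω - T y y' ω), h0 x y,
          h0 y x, h0 x' y', h0 y' x', sq_nonneg (T x y ω - T y x ω),
          sq_nonneg (T x y ω - T x' y' ω), sq_nonneg (T x y ω - T y' x' ω),
          sq_nonneg (T y x ω - T x' y' ω), sq_nonneg (T y x ω - T y' x' ω),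
          sq_nonneg (T x' y' ω - T y' x' ω)]
    _ = 4 * ((∫ ω, T x y ω ^ 2) + (∫ ω, T y x ω ^ 2) + (∫ ω, T x' y' ω ^ 2)
          + ∫ ω, T y' x' ω ^ 2) := by
        rw [integral_const_mul, integral_add ?_ (hI y' x'), integral_add ?_ (hI x' y'),
          integral_add (hI x y) (hI y x)]
        exacts [(hI x y).add (hI y x), ((hI x y).add (hI y x)).add (hI x' y')]
    _ ≤ _ := by
        have h := integral_sq_passageTime_le hmeas ht0 ht2 hσ
        linarith [h x y, h y x, h x' y', h y' x']

theorem integral_sq_sub_passageTime_translate_le (hmeas : ∀ e, Measurable (t e))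
    (ht0 : ∀ᵐ ω, ∀ e, 0 ≤ t e ω) (ht2 : ∀ e, MemLp (t e) 2 ℙ) {σ2 : ℝ}
    (hσ : ∀ e, ∫ ω, t e ω ^ 2 ≤ σ2) (hσ0 : 0 ≤ σ2) (τ : Vertex d) {m : ℕ} {z w : Vertex d}
    (hz : z ∈ ballOne d m) (hw : w ∈ ballOne d m) :
    ∫ ω, (passageTime (fun e => t e ω) z (z + τ) - passageTime (fun e => t e ω) w (w + τ)) ^ 2
      ≤ 64 * (m : ℝ) ^ 2 * σ2 := by
  have hzw : (l1Norm (w - z) : ℝ) ≤ 2 * m := by exact_mod_cast l1Norm_sub_le_of_mem_ballOne hz hw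
  have hwz : (l1Norm (z - w) : ℝ) ≤ 2 * m := by exact_mod_cast l1Norm_sub_le_of_mem_ballOne hw hz
  refine (integral_sq_sub_passageTime_le hmeas ht0 ht2 hσ z (z + τ) w (w + τ)).trans ?_
  rw [add_sub_add_right_eq_sub, add_sub_add_right_eq_sub]
  have h0 : ∀ u : Vertex d, (0 : ℝ) ≤ l1Norm u := fun u => Nat.cast_nonneg _
  nlinarith [mul_le_mul hzw hzw (h0 _) (by positivity), mul_le_mul hwz hwz (h0 _) (by positivity)]

theorem identDistrib_passageTime_translate {μ : Measure ℝ} (hmeas : ∀ e, Measurable (t e))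
    (hiid : iIndepFun t ℙ) (hdist : ∀ e, Measure.map (t e) ℙ = μ) (z τ : Vertex d) :
    IdentDistrib (fun ω => passageTime (fun e => t e ω) z (z + τ))
      (fun ω => passageTime (fun e => t e ω) 0 τ) ℙ ℙ := by
  have h := identDistrib_pi_of_iIndepFun (fun e => hmeas (edgeShift z e)) hmeas
    (hiid.precomp (edgeShift_injective z)) hiid (fun e => hdist _) hdist
  have hshift : (fun ω => passageTime (fun e => t e ω) z (z + τ))
      = (fun g => passageTime g 0 τ) ∘ fun ω e => t (edgeShift z e) ω := by
    funext ω
    simpa [add_comm] using passageTime_add_add (fun e => t e ω) 0 τ z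
  rw [hshift]
  exact h.comp (measurable_passageTime 0 τ)

end PassageTimeMoments

theorem variance_averaged_approximation_general
    {d : ℕ}
    {Ω : Type} [MeasureSpace Ω] [IsProbabilityMeasure (ℙ : Measure Ω)]
    (μ : Measure ℝ)
    (t : Edge d → Ω → ℝ)
    (hmeas : ∀ e, Measurable (t e))
    (hiid : iIndepFun t ℙ)
    (hdist : ∀ e, Measure.map (t e) ℙ = μ)
    (hnonneg : μ (Set.Iio 0) = 0)
    (hL2 : Integrable (fun x => x ^ 2) μ) :
    ∃ C > (0 : ℝ), ∀ n : ℕ, 1 ≤ n →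
      |variance (Tn t n) ℙ - variance (Fn t n) ℙ| ≤ C * (n : ℝ) ^ (3 / 4 : ℝ) := by
  set σ2 := ∫ x, x ^ 2 ∂μ
  have hlaw : ∀ e, IdentDistrib (t e) id ℙ μ := fun e =>
    ⟨(hmeas e).aemeasurable, aemeasurable_id, by rw [hdist e, Measure.map_id]⟩
  have ht2 : ∀ e, MemLp (t e) 2 ℙ := fun e =>
    (hlaw e).memLp_iff.2 ((memLp_two_iff_integrable_sq aestronglyMeasurable_id).2 hL2)
  have hσ : ∀ e, ∫ ω, t e ω ^ 2 ≤ σ2 := fun e =>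
    ((hlaw e).comp (measurable_id.pow_const 2)).integral_eq.le
  have ht0 := ae_forall_nonneg_of_map_eq hmeas hdist hnonneg
  have hσ0 : 0 ≤ σ2 := integral_nonneg fun x => sq_nonneg x
  refine ⟨128 * σ2 + 1, by positivity, fun n hn => ?_⟩
  set m := ⌈(n : ℝ) ^ (1 / 4 : ℝ)⌉₊
  -- `Tn t n` and `Fn t n` unfold to `X 0` and to the average of `X z` over `B_m`,
  -- where `X z ω = T(z, z + n e₁)`
  calc |variance (Tn t n) ℙ - variance (Fn t n) ℙ| ≤ 64 * (m : ℝ) ^ 2 * σ2 / 2 :=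
        abs_variance_sub_variance_average_le ⟨0, zero_mem_ballOne m⟩
          (fun z _ => memLp_passageTime hmeas ht0 ht2 z (z + target d n))
          (fun z _ => identDistrib_passageTime_translate hmeas hiid hdist z (target d n))
          fun z hz w hw =>
            integral_sq_sub_passageTime_translate_le hmeas ht0 ht2 hσ hσ0 (target d n) hz hw
    _ ≤ (128 * σ2 + 1) * (n : ℝ) ^ (3 / 4 : ℝ) := by
        nlinarith [natCeil_rpow_quarter_sq_le hn, Real.rpow_nonneg (Nat.cast_nonneg n) (3 / 4 : ℝ)]

/-- **Variance approximation by the averaged passage time.**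
Suppose `E[t_e²] < ∞`, `d ≥ 2` and `μ({0}) < p_c(d)`. Then there is a constant `C > 0`
such that `|Var(T_n) − Var(F_n)| ≤ C n^{3/4}` for all `n ≥ 1`. -/
theorem variance_averaged_approximation
    {d : ℕ} (hd : 2 ≤ d)
    {Ω : Type} [MeasureSpace Ω] [IsProbabilityMeasure (ℙ : Measure Ω)]
    (μ : Measure ℝ) [IsProbabilityMeasure μ]
    (t : Edge d → Ω → ℝ)
    (hmeas : ∀ e, Measurable (t e))
    (hiid : iIndepFun t ℙ)
    (hdist : ∀ e, Measure.map (t e) ℙ = μ)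
    (hnonneg : μ (Set.Iio 0) = 0)
    (hpc : μ {0} < ENNReal.ofReal (pc d))
    (hL2 : Integrable (fun x => x ^ 2) μ) :
    ∃ C > (0 : ℝ), ∀ n : ℕ, 1 ≤ n →
      |variance (Tn t n) ℙ - variance (Fn t n) ℙ| ≤ C * (n : ℝ) ^ (3 / 4 : ℝ) :=
  variance_averaged_approximation_general μ t hmeas hiid hdist hnonneg hL2

end FPP
end

section
/- (Falik–Samorodnitsky) Let (Ω, P) be a probability space and let f ∈ L²(Ω, P) be a function of a sequence of independent random variables X₁, X₂, .... Let F₀ be the trivial σ-algebra, F_i = σ(X₁, ..., X_i), and let Δ_i f = E[f | F_i] − E[f | F_{i−1}] be the martingale increments. Then Var(f) · log( Var(f) / Σ_{i=1}^∞ (E|Δ_i f|)² ) ≤ Σ_{i=1}^∞ Ent((Δ_i f)²). -/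
/-!
Since `f` is measurable with respect to `σ(X₁, X₂, …)`, Lévy's upward theorem (almost everywhere)
together with Fatou's lemma and the `L²`-contractivity of conditional expectation give
`E[(E[f | Fₙ])²] → E[f²]`; as martingale increments are orthogonal, `Var f = ∑ᵢ aᵢ` with
`aᵢ = E[(Δᵢ f)²]`.

For `Y ∈ L²` and `c > 0`, the pointwise inequality `y² log (y² / c²) ≥ 2 (y² − c |y|)` integrates,
with the choice `c² = t E[Y²]` and AM–GM, to the variational bound
`Ent(Y²) ≥ E[Y²] (log t + 1) − t (E|Y|)²` for every `t > 0`. Summing it over `Y = Δᵢ f` with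
`t = Var f / ∑ᵢ (E|Δᵢ f|)²` gives the inequality.
-/

open MeasureTheory ProbabilityTheory
open scoped ENNReal

/-- The entropy `Ent(Y) = E[Y log Y] − E[Y] log E[Y]` of a nonnegative random variable,
valued in `[0, ∞]`: it is `+∞` when `Y log Y` fails to be integrable. -/
noncomputable def entNN {Ω : Type} [MeasurableSpace Ω] (μ : Measure Ω) (Y : Ω → ℝ) :
    ℝ≥0∞ :=
  open Classical in
  if Integrable (fun ω => Y ω * Real.log (Y ω)) μ then
    ENNReal.ofReal (∫ ω, Y ω * Real.log (Y ω) ∂μ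
      - (∫ ω, Y ω ∂μ) * Real.log (∫ ω, Y ω ∂μ))
  else ∞

/-- The σ-algebra `σ(X₀, …, X_{i-1})` generated by the first `i` variables. -/
def firstVars {Ω : Type} [MeasurableSpace Ω] (X : ℕ → Ω → ℝ) (i : ℕ) :
    MeasurableSpace Ω :=
  MeasurableSpace.comap (fun ω (j : Fin i) => X j ω) inferInstance

open Filter Topology Real

theorem sq_mul_log_sq_add_two_mul_sub_le {y c : ℝ} (hc : 0 < c) :
    y ^ 2 * log (c ^ 2) + 2 * (y ^ 2 - c * |y|) ≤ y ^ 2 * log (y ^ 2) := by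
  rcases eq_or_ne y 0 with rfl | hy
  · simp
  have hu : 0 < |y| := abs_pos.2 hy
  have hlog : 1 - c / |y| ≤ log |y| - log c := by
    simpa [inv_div, log_div hu.ne' hc.ne'] using one_sub_inv_le_log_of_pos (div_pos hu hc)
  have hcy : |y| ^ 2 * (c / |y|) = c * |y| := by field_simp
  rw [← sq_abs y, log_pow, log_pow]
  push_cast
  nlinarith [mul_le_mul_of_nonneg_left hlog (sq_nonneg |y|)]

theorem ENNReal.ofReal_tsum_le_tsum_ofReal {ι : Type*} {r : ι → ℝ} (hr : Summable r) :
    ENNReal.ofReal (∑' i, r i) ≤ ∑' i, ENNReal.ofReal (r i) := by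
  have hpos : Summable fun i => max (r i) 0 :=
    hr.abs.of_nonneg_of_le (fun i => le_max_right _ _) fun i => by
      rcases le_total (r i) 0 with h | h <;> simp [h, abs_of_nonneg, abs_of_nonpos]
  calc ENNReal.ofReal (∑' i, r i) ≤ ENNReal.ofReal (∑' i, max (r i) 0) :=
        ENNReal.ofReal_le_ofReal (hr.tsum_le_tsum (fun i => le_max_left _ _) hpos)
    _ = ∑' i, ENNReal.ofReal (r i) := by
        rw [ENNReal.ofReal_tsum_of_nonneg (fun i => le_max_right _ _) hpos]
        simp

theorem ofReal_mul_log_div_tsum_le_tsum {ι : Type*} {a b : ι → ℝ} {e : ι → ℝ≥0∞} {V : ℝ}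
    (hV : 0 ≤ V) (ha : HasSum a V) (hb : ∀ i, 0 ≤ b i)
    (he : ∀ i t, 0 < t → ENNReal.ofReal (a i * (log t + 1) - t * b i) ≤ e i) :
    ENNReal.ofReal (V * log (V / ∑' i, b i)) ≤ ∑' i, e i := by
  set B := ∑' i, b i
  rcases le_or_gt (V * log (V / B)) 0 with hle | hpos
  · simp [ENNReal.ofReal_eq_zero.2 hle]
  have hB : B ≠ 0 := fun h => by simp [h] at hpos
  have hb_sum : Summable b := by
    by_contra h
    exact hB (tsum_eq_zero_of_not_summable h)
  have ht : 0 < V / B := by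
    have : V ≠ 0 := fun h => by simp [h] at hpos
    exact div_pos (hV.lt_of_ne' this) ((tsum_nonneg hb).lt_of_ne' hB)
  have hr : HasSum (fun i => a i * (log (V / B) + 1) - V / B * b i) (V * log (V / B)) := by
    have h := (ha.mul_right (log (V / B) + 1)).sub (hb_sum.hasSum.mul_left (V / B))
    rwa [div_mul_cancel₀ _ hB, mul_add_one, add_sub_cancel_right] at h
  calc ENNReal.ofReal (V * log (V / B))
      ≤ ∑' i, ENNReal.ofReal (a i * (log (V / B) + 1) - V / B * b i) := by
        rw [← hr.tsum_eq]; exact ENNReal.ofReal_tsum_le_tsum_ofReal hr.summable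
    _ ≤ ∑' i, e i := ENNReal.tsum_le_tsum fun i => he i _ ht

theorem ofReal_integral_sq_mul_log_sub_le_entNN {Ω : Type} [MeasurableSpace Ω] {μ : Measure Ω}
    [IsFiniteMeasure μ] {Y : Ω → ℝ} (hY : MemLp Y 2 μ) {t : ℝ} (ht : 0 < t) :
    ENNReal.ofReal ((∫ ω, Y ω ^ 2 ∂μ) * (log t + 1) - t * (∫ ω, |Y ω| ∂μ) ^ 2)
      ≤ entNN μ (fun ω => Y ω ^ 2) := by
  unfold entNN
  split_ifs with hint
  swap
  · exact le_top
  refine ENNReal.ofReal_le_ofReal ?_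
  beta_reduce at hint ⊢
  set a := ∫ ω, Y ω ^ 2 ∂μ
  set m := ∫ ω, |Y ω| ∂μ
  rcases (integral_nonneg fun ω => sq_nonneg (Y ω) : 0 ≤ a).eq_or_lt with ha | ha
  · have hY0 : (fun ω => Y ω ^ 2) =ᵐ[μ] 0 :=
      (integral_eq_zero_iff_of_nonneg (fun ω => sq_nonneg (Y ω)) hY.integrable_sq).1 ha.symm
    have ha0 : a = 0 := ha.symm
    rw [ha0, integral_eq_zero_of_ae (hY0.mono fun ω h => by simp [show Y ω ^ 2 = 0 from h])]
    nlinarith [sq_nonneg m]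
  set c := √(a * t)
  have hc : 0 < c := sqrt_pos.2 (mul_pos ha ht)
  have hc2 : c ^ 2 = a * t := sq_sqrt (mul_pos ha ht).le
  have hYabs : Integrable (fun ω => |Y ω|) μ := (hY.integrable one_le_two).abs
  have hpt : a * log (c ^ 2) + 2 * (a - c * m) ≤ ∫ ω, Y ω ^ 2 * log (Y ω ^ 2) ∂μ := by
    have h1 : Integrable (fun ω => Y ω ^ 2 * log (c ^ 2)) μ := hY.integrable_sq.mul_const _
    have h2 : Integrable (fun ω => c * |Y ω|) μ := hYabs.const_mul c
    have h3 : Integrable (fun ω => 2 * (Y ω ^ 2 - c * |Y ω|)) μ :=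
      (hY.integrable_sq.sub h2).const_mul 2
    calc a * log (c ^ 2) + 2 * (a - c * m)
        = ∫ ω, Y ω ^ 2 * log (c ^ 2) + 2 * (Y ω ^ 2 - c * |Y ω|) ∂μ := by
          rw [integral_add h1 h3, integral_mul_const, integral_const_mul,
            integral_sub hY.integrable_sq h2, integral_const_mul]
      _ ≤ _ := integral_mono (h1.add h3) hint fun ω => sq_mul_log_sq_add_two_mul_sub_le hc
  -- AM–GM, using `c² = a t`
  have hamgm : 2 * (c * m) ≤ t * m ^ 2 + a := by
    nlinarith [sq_nonneg (c - t * m)]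
  rw [hc2, log_mul ha.ne' ht.ne'] at hpt
  nlinarith

namespace MeasureTheory

section ConditionalExpectation

variable {Ω : Type*} {m m0 : MeasurableSpace Ω} {μ : Measure Ω} {Y : Ω → ℝ}

theorem MemLp.toReal_eLpNorm_two_sq (hY : MemLp Y 2 μ) :
    (eLpNorm Y 2 μ).toReal ^ 2 = ∫ ω, Y ω ^ 2 ∂μ := by
  rw [hY.eLpNorm_eq_integral_rpow_norm two_ne_zero ENNReal.ofNat_ne_top,
    ENNReal.toReal_ofReal (by positivity), ← Real.rpow_natCast, ← Real.rpow_mul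
      (integral_nonneg fun ω => by positivity)]
  simp

variable [IsFiniteMeasure μ]

theorem integral_sq_eq_integral_sq_condExp_add (hm : m ≤ m0) (hY : MemLp Y 2 μ) :
    ∫ ω, Y ω ^ 2 ∂μ = ∫ ω, (μ[Y|m]) ω ^ 2 ∂μ + ∫ ω, (Y ω - (μ[Y|m]) ω) ^ 2 ∂μ := by
  set P := μ[Y|m]
  have hP : MemLp P 2 μ := hY.condExp one_le_two
  have hPY : Integrable (P * Y) μ := hP.integrable_mul hY
  have hcross : ∫ ω, P ω * Y ω ∂μ = ∫ ω, P ω ^ 2 ∂μ := by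
    calc ∫ ω, P ω * Y ω ∂μ = ∫ ω, (μ[P * Y|m]) ω ∂μ := (integral_condExp hm).symm
      _ = ∫ ω, P ω ^ 2 ∂μ := integral_congr_ae <|
          (condExp_mul_of_aestronglyMeasurable_left stronglyMeasurable_condExp.aestronglyMeasurable
            hPY (hY.integrable one_le_two)).mono fun ω h => h.trans (sq _).symm
  have hexp : ∀ ω, (Y ω - P ω) ^ 2 = Y ω ^ 2 - 2 * (P ω * Y ω) + P ω ^ 2 := fun ω => by ring
  have hPY2 : Integrable (fun ω => 2 * (P ω * Y ω)) μ := hPY.const_mul 2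
  have hYPY : Integrable (fun ω => Y ω ^ 2 - 2 * (P ω * Y ω)) μ := hY.integrable_sq.sub hPY2
  simp_rw [hexp]
  rw [integral_add hYPY hP.integrable_sq, integral_sub hY.integrable_sq hPY2,
    integral_const_mul, hcross]
  ring

end ConditionalExpectation

section Filtration

variable {Ω : Type*} {m0 : MeasurableSpace Ω} {μ : Measure Ω} {ℱ : Filtration ℕ m0} {f : Ω → ℝ}

theorem monotone_eLpNorm_condExp [IsFiniteMeasure μ] {p : ℝ≥0∞} (hp : 1 ≤ p) :
    Monotone fun n => eLpNorm (μ[f|ℱ n]) p μ := by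
  refine monotone_nat_of_le_succ fun n => ?_
  calc eLpNorm (μ[f|ℱ n]) p μ = eLpNorm (μ[μ[f|ℱ (n + 1)]|ℱ n]) p μ :=
        eLpNorm_congr_ae (condExp_condExp_of_le (ℱ.mono n.le_succ) (ℱ.le _)).symm
    _ ≤ _ := eLpNorm_condExp_le_eLpNorm _ hp

theorem Integrable.tendsto_eLpNorm_condExp_eLpNorm [IsFiniteMeasure μ] {p : ℝ≥0∞} (hp : 1 ≤ p)
    (hf : Integrable f μ) (hfm : StronglyMeasurable[⨆ n, ℱ n] f) :
    Tendsto (fun n => eLpNorm (μ[f|ℱ n]) p μ) atTop (𝓝 (eLpNorm f p μ)) := by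
  have hsup : ⨆ n, eLpNorm (μ[f|ℱ n]) p μ = eLpNorm f p μ :=
    le_antisymm (iSup_le fun n => eLpNorm_condExp_le_eLpNorm f hp)
      (Lp.eLpNorm_le_of_ae_tendsto (Eventually.of_forall (le_iSup _))
        (fun n => integrable_condExp.aestronglyMeasurable) (hf.tendsto_ae_condExp hfm))
  exact hsup ▸ tendsto_atTop_iSup (monotone_eLpNorm_condExp hp)

theorem MemLp.tendsto_integral_sq_condExp [IsFiniteMeasure μ] (hf : MemLp f 2 μ)
    (hfm : StronglyMeasurable[⨆ n, ℱ n] f) :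
    Tendsto (fun n => ∫ ω, (μ[f|ℱ n]) ω ^ 2 ∂μ) atTop (𝓝 (∫ ω, f ω ^ 2 ∂μ)) := by
  have h := ((ENNReal.tendsto_toReal hf.eLpNorm_ne_top).comp
    ((hf.integrable one_le_two).tendsto_eLpNorm_condExp_eLpNorm one_le_two hfm)).pow 2
  rw [hf.toReal_eLpNorm_two_sq] at h
  exact h.congr fun n => (hf.condExp one_le_two).toReal_eLpNorm_two_sq

theorem integral_sq_condExp_succ [IsFiniteMeasure μ] (hf : MemLp f 2 μ) (n : ℕ) :
    ∫ ω, (μ[f|ℱ (n + 1)]) ω ^ 2 ∂μ = ∫ ω, (μ[f|ℱ n]) ω ^ 2 ∂μ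
      + ∫ ω, ((μ[f|ℱ (n + 1)]) ω - (μ[f|ℱ n]) ω) ^ 2 ∂μ := by
  have htower : μ[μ[f|ℱ (n + 1)]|ℱ n] =ᵐ[μ] μ[f|ℱ n] :=
    condExp_condExp_of_le (ℱ.mono n.le_succ) (ℱ.le _)
  rw [integral_sq_eq_integral_sq_condExp_add (ℱ.le n) (hf.condExp one_le_two)]
  congr 1 <;> refine integral_congr_ae (htower.mono fun ω h => ?_) <;> simp only [h]

theorem hasSum_integral_sq_condExp_succ_sub [IsProbabilityMeasure μ] (hbot : ℱ 0 = ⊥)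
    (hf : MemLp f 2 μ) (hfm : StronglyMeasurable[⨆ n, ℱ n] f) :
    HasSum (fun i => ∫ ω, ((μ[f|ℱ (i + 1)]) ω - (μ[f|ℱ i]) ω) ^ 2 ∂μ) (variance f μ) := by
  have hpartial : ∀ n, ∑ i ∈ Finset.range n, ∫ ω, ((μ[f|ℱ (i + 1)]) ω - (μ[f|ℱ i]) ω) ^ 2 ∂μ
      = ∫ ω, (μ[f|ℱ n]) ω ^ 2 ∂μ - (∫ ω, f ω ∂μ) ^ 2 := by
    intro n
    induction n with
    | zero => simp [hbot, condExp_bot]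
    | succ n ih => rw [Finset.sum_range_succ, ih, integral_sq_condExp_succ hf n]; ring
  rw [hasSum_iff_tendsto_nat_of_nonneg (fun i => integral_nonneg fun ω => sq_nonneg _),
    variance_eq_sub hf]
  simp_rw [hpartial]
  exact (hf.tendsto_integral_sq_condExp hfm).sub_const _

end Filtration

end MeasureTheory

section FirstVars

variable {Ω : Type} [MeasurableSpace Ω] {X : ℕ → Ω → ℝ}

theorem measurable_firstVars {i j : ℕ} (hij : i < j) : Measurable[firstVars X j] (X i) :=
  (measurable_pi_apply (⟨i, hij⟩ : Fin j)).comp (comap_measurable (fun ω (k : Fin j) => X k ω))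

theorem firstVars_mono : Monotone (firstVars X) := fun _ j hij =>
  Measurable.comap_le <| @measurable_pi_lambda _ _ _ (firstVars X j) _ _ fun k =>
    measurable_firstVars (k.2.trans_le hij)

theorem firstVars_le (hX : ∀ i, Measurable (X i)) (i : ℕ) :
    firstVars X i ≤ ‹MeasurableSpace Ω› :=
  Measurable.comap_le (measurable_pi_lambda (fun ω (k : Fin i) => X k ω) fun k => hX k)

theorem firstVars_zero : firstVars X 0 = ⊥ := by
  rw [firstVars, MeasurableSpace.pi, iSup_of_empty, MeasurableSpace.comap_bot]

theorem measurable_iSup_firstVars : Measurable[⨆ n, firstVars X n] fun ω i => X i ω :=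
  @measurable_pi_lambda _ _ _ (⨆ n, firstVars X n) _ _ fun i =>
    (measurable_firstVars i.lt_succ_self).mono (le_iSup (firstVars X) (i + 1)) le_rfl

def firstVarsFiltration (hX : ∀ i, Measurable (X i)) : Filtration ℕ ‹MeasurableSpace Ω› :=
  ⟨firstVars X, firstVars_mono, firstVars_le hX⟩

end FirstVars

theorem falik_samorodnitsky_general
    {Ω : Type} [MeasureSpace Ω] [IsProbabilityMeasure (ℙ : Measure Ω)]
    (X : ℕ → Ω → ℝ) (hX : ∀ i, Measurable (X i))
    (g : (ℕ → ℝ) → ℝ) (hg : Measurable g)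
    (f : Ω → ℝ) (hfg : f = fun ω => g fun i => X i ω)
    (hL2 : MemLp f 2 ℙ) :
    ENNReal.ofReal (variance f ℙ *
        Real.log (variance f ℙ /
          ∑' i : ℕ, (∫ ω, |(ℙ[f|firstVars X (i + 1)]) ω
              - (ℙ[f|firstVars X i]) ω| ∂(ℙ : Measure Ω)) ^ 2))
      ≤ ∑' i : ℕ, entNN (ℙ : Measure Ω)
          (fun ω => ((ℙ[f|firstVars X (i + 1)]) ω - (ℙ[f|firstVars X i]) ω) ^ 2) := by
  have hfm : StronglyMeasurable[⨆ n, firstVarsFiltration hX n] f :=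
    hfg ▸ (hg.comp measurable_iSup_firstVars).stronglyMeasurable
  have hvar := hasSum_integral_sq_condExp_succ_sub firstVars_zero hL2 hfm
  refine ofReal_mul_log_div_tsum_le_tsum (variance_nonneg f ℙ) hvar (fun i => sq_nonneg _)
    fun i t ht => ?_
  exact ofReal_integral_sq_mul_log_sub_le_entNN
    ((hL2.condExp one_le_two).sub (hL2.condExp one_le_two)) ht

/-- **The Falik–Samorodnitsky inequality.**
Let `f ∈ L²` be a function of independent random variables `X₁, X₂, …`, and let
`Δᵢ f = E[f | Fᵢ] − E[f | F_{i−1}]` be its martingale increments relative to the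
filtration `Fᵢ = σ(X₁, …, Xᵢ)` (with `F₀` trivial). Then
`Var(f) · log(Var(f) / ∑ᵢ (E|Δᵢ f|)²) ≤ ∑ᵢ Ent((Δᵢ f)²)`. -/
theorem falik_samorodnitsky
    {Ω : Type} [MeasureSpace Ω] [IsProbabilityMeasure (ℙ : Measure Ω)]
    (X : ℕ → Ω → ℝ) (hX : ∀ i, Measurable (X i))
    (hindep : iIndepFun X ℙ)
    (g : (ℕ → ℝ) → ℝ) (hg : Measurable g)
    (f : Ω → ℝ) (hfg : f = fun ω => g fun i => X i ω)
    (hL2 : MemLp f 2 ℙ) :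
    ENNReal.ofReal (variance f ℙ *
        Real.log (variance f ℙ /
          ∑' i : ℕ, (∫ ω, |(ℙ[f|firstVars X (i + 1)]) ω
              - (ℙ[f|firstVars X i]) ω| ∂(ℙ : Measure Ω)) ^ 2))
      ≤ ∑' i : ℕ, entNN (ℙ : Measure Ω)
          (fun ω => ((ℙ[f|firstVars X (i + 1)]) ω - (ℙ[f|firstVars X i]) ω) ^ 2) :=
  falik_samorodnitsky_general X hX g hg f hfg hL2
end

section
/- (Falik–Samorodnitsky entropy lower bound) If X is a random variable with X ≥ 0 almost surely and E[X²] < ∞, then Ent(X²) ≥ E[X²] · log( E[X²] / (E[X])² ). -/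
open MeasureTheory ProbabilityTheory
open scoped ENNReal

/-- The entropy `Ent(Y) = E[Y log Y] − E[Y] log E[Y]` of a nonnegative random variable,
as an extended real number: it is `+∞` when `Y log Y` fails to be integrable. -/
noncomputable def entE {Ω : Type} [MeasurableSpace Ω] (μ : Measure Ω) (Y : Ω → ℝ) :
    EReal :=
  open Classical in
  if Integrable (fun ω => Y ω * Real.log (Y ω)) μ then
    ((∫ ω, Y ω * Real.log (Y ω) ∂μ
      - (∫ ω, Y ω ∂μ) * Real.log (∫ ω, Y ω ∂μ) : ℝ) : EReal)
  else ⊤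

/-!
Put `c = E[X²] / E[X]`. Multiplying `log (c / x) ≤ c / x - 1` by `x²` gives the pointwise bound
`x² log x² ≥ 2 (x² log c + x² - c x)`, whose right-hand side integrates to
`2 E[X²] log c`, because `c E[X] = E[X²]`. This is exactly the claimed inequality.
-/

open Real

lemma two_mul_sq_mul_log_add_sq_sub_le_sq_mul_log_sq {c x : ℝ} (hc : 0 < c) (hx : 0 ≤ x) :
    2 * (x ^ 2 * log c + x ^ 2 - c * x) ≤ x ^ 2 * log (x ^ 2) := by
  rcases hx.eq_or_lt with rfl | hx
  · simp
  have hlog : x ^ 2 * log (c / x) ≤ x ^ 2 * (c / x - 1) :=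
    mul_le_mul_of_nonneg_left (log_le_sub_one_of_pos (by positivity)) (sq_nonneg x)
  have hcx : x ^ 2 * (c / x - 1) = c * x - x ^ 2 := by field_simp
  rw [log_div hc.ne' hx.ne', hcx] at hlog
  rw [log_pow]
  push_cast
  linarith

lemma two_mul_integral_sq_mul_log_add_le_integral_sq_mul_log_sq {α : Type*}
    [MeasurableSpace α] {μ : Measure α} {X : α → ℝ} (hpos : ∀ᵐ a ∂μ, 0 ≤ X a)
    (hX : Integrable X μ) (hX2 : Integrable (fun a => X a ^ 2) μ)
    (hXlog : Integrable (fun a => X a ^ 2 * log (X a ^ 2)) μ) {c : ℝ} (hc : 0 < c) :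
    2 * ((∫ a, X a ^ 2 ∂μ) * log c + ∫ a, X a ^ 2 ∂μ - c * ∫ a, X a ∂μ)
      ≤ ∫ a, X a ^ 2 * log (X a ^ 2) ∂μ :=
  calc 2 * ((∫ a, X a ^ 2 ∂μ) * log c + ∫ a, X a ^ 2 ∂μ - c * ∫ a, X a ∂μ)
      = ∫ a, 2 * (X a ^ 2 * log c + X a ^ 2 - c * X a) ∂μ := by
        rw [integral_const_mul, integral_sub (f := fun a => X a ^ 2 * log c + X a ^ 2)
          ((hX2.mul_const _).add hX2) (hX.const_mul c), integral_add (hX2.mul_const _) hX2,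
          integral_mul_const, integral_const_mul]
    _ ≤ ∫ a, X a ^ 2 * log (X a ^ 2) ∂μ :=
        integral_mono_ae ((((hX2.mul_const _).add hX2).sub (hX.const_mul c)).const_mul 2) hXlog
          (hpos.mono fun _ hx => two_mul_sq_mul_log_add_sq_sub_le_sq_mul_log_sq hc hx)

lemma integral_sq_eq_zero_of_integral_eq_zero {α : Type*} [MeasurableSpace α]
    {μ : Measure α} {X : α → ℝ} (hpos : ∀ᵐ a ∂μ, 0 ≤ X a) (hX : Integrable X μ)
    (hm : ∫ a, X a ∂μ = 0) : ∫ a, X a ^ 2 ∂μ = 0 := by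
  have hX0 : X =ᵐ[μ] 0 := (integral_eq_zero_iff_of_nonneg_ae hpos hX).mp hm
  rw [integral_congr_ae (hX0.mono fun a ha => by simp [ha] : (fun a => X a ^ 2) =ᵐ[μ] 0)]
  simp

/-- **Falik–Samorodnitsky entropy lower bound.**
If `X ≥ 0` almost surely and `E[X²] < ∞`, then
`Ent(X²) ≥ E[X²] · log(E[X²] / (E[X])²)`. -/
theorem falik_samorodnitsky_entropy_lower_bound
    {Ω : Type} [MeasureSpace Ω] [IsProbabilityMeasure (ℙ : Measure Ω)]
    (X : Ω → ℝ) (hpos : ∀ᵐ ω ∂(ℙ : Measure Ω), 0 ≤ X ω)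
    (hL2 : MemLp X 2 ℙ) :
    (((∫ ω, X ω ^ 2 ∂(ℙ : Measure Ω)) *
        Real.log ((∫ ω, X ω ^ 2 ∂(ℙ : Measure Ω)) /
          (∫ ω, X ω ∂(ℙ : Measure Ω)) ^ 2) : ℝ) : EReal)
      ≤ entE (ℙ : Measure Ω) (fun ω => X ω ^ 2) := by
  by_cases hXlog : Integrable (fun ω => X ω ^ 2 * log (X ω ^ 2)) ℙ
  swap
  · rw [entE, if_neg hXlog]
    exact le_top
  rw [entE, if_pos hXlog, EReal.coe_le_coe_iff]
  have hX := hL2.integrable one_le_two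
  have key := fun c (hc : 0 < c) =>
    two_mul_integral_sq_mul_log_add_le_integral_sq_mul_log_sq hpos hX hL2.integrable_sq hXlog hc
  set m := ∫ ω, X ω ∂(ℙ : Measure Ω)
  set s := ∫ ω, X ω ^ 2 ∂(ℙ : Measure Ω)
  rcases (show 0 ≤ m from integral_nonneg_of_ae hpos).eq_or_lt with hm | hm
  · have hs : s = 0 := integral_sq_eq_zero_of_integral_eq_zero hpos hX hm.symm
    have hT := key 1 one_pos
    rw [hs, ← hm] at hT ⊢
    simpa using hT
  have hm_sq_le : m ^ 2 ≤ s :=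
    sub_nonneg.mp <| (variance_eq_sub hL2).symm.trans_ge (variance_nonneg X ℙ)
  have hs : 0 < s := (pow_pos hm 2).trans_le hm_sq_le
  have hsm := key (s / m) (div_pos hs hm)
  rw [div_mul_cancel₀ s hm.ne', log_div hs.ne' hm.ne'] at hsm
  rw [log_div hs.ne' (pow_ne_zero 2 hm.ne'), log_pow]
  push_cast
  linarith
end

section
/- (Two-point logarithmic Sobolev inequality, Bonami–Gross) Let f : {0,1} → ℝ and let μ = (1/2)(δ₀ + δ₁) be the uniform measure on {0,1}. Then Ent_μ(f²) ≤ (1/2)·|f(0) − f(1)|². -/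
/-!
With `0 ≤ b ≤ a`, consider `G x = (x - b)² / 2 - Ent(x², b²)` on `[b, ∞)`; it vanishes at `x = b`.
Since `(t log t)' = log t + 1`, the derivative of the entropy in `x` is
`x (log x² - log ((x² + b²) / 2))`, and writing `r = b / x ∈ [0, 1]` the monotonicity of `G`
reduces to the one-variable inequality `r - 1 ≤ log ((1 + r²) / 2)`. For general `f`, pass to
`|f 0|, |f 1|`, which leaves `Ent(f²)` unchanged and only decreases `|f 0 - f 1|`.
-/

open Real

/-- The entropy of a nonnegative function `g : {0,1} → ℝ` with respect to the uniform
measure `μ = (1/2)(δ₀ + δ₁)`: `Ent_μ(g) = E_μ[g log g] − E_μ[g] log E_μ[g]`, where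
`E_μ[g] = (g 0 + g 1)/2` (with the convention `0 · log 0 = 0`, automatic since
`Real.log 0 = 0`). -/
noncomputable def entTwoPoint (g : Fin 2 → ℝ) : ℝ :=
  (g 0 * Real.log (g 0) + g 1 * Real.log (g 1)) / 2
    - ((g 0 + g 1) / 2) * Real.log ((g 0 + g 1) / 2)

lemma sub_one_le_log_one_add_sq_div_two {r : ℝ} (hr : r ≤ 1) :
    r - 1 ≤ log ((1 + r ^ 2) / 2) := by
  have hderiv (x : ℝ) : HasDerivAt (fun x => log ((1 + x ^ 2) / 2) - x)
      (x / ((1 + x ^ 2) / 2) - 1) x := by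
    have hsq : HasDerivAt (fun x : ℝ => (1 + x ^ 2) / 2) x x := by
      simpa using ((hasDerivAt_pow 2 x).const_add 1).div_const 2
    exact (hsq.log (by positivity)).sub (hasDerivAt_id x)
  -- the derivative is `-(1 - x)² / (1 + x²)`
  have hanti := antitone_of_hasDerivAt_nonpos hderiv fun x =>
    show x / ((1 + x ^ 2) / 2) - 1 ≤ 0 by
    rw [sub_nonpos, div_le_one (by positivity)]
    nlinarith [sq_nonneg (1 - x)]
  have := hanti hr
  norm_num at this
  linarith

lemma entTwoPoint_comm (u v : ℝ) : entTwoPoint ![u, v] = entTwoPoint ![v, u] := by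
  simp only [entTwoPoint, Matrix.cons_val_zero, Matrix.cons_val_one, add_comm u v]
  ring

lemma entTwoPoint_const (u : ℝ) : entTwoPoint ![u, u] = 0 := by
  simp only [entTwoPoint, Matrix.cons_val_zero, Matrix.cons_val_one, add_self_div_two]
  ring

lemma continuous_entTwoPoint : Continuous entTwoPoint := by
  unfold entTwoPoint
  fun_prop

lemma hasDerivAt_entTwoPoint_sq (b : ℝ) {x : ℝ} (hx : x ≠ 0) :
    HasDerivAt (fun x => entTwoPoint ![x ^ 2, b ^ 2])
      (x * (log (x ^ 2) - log ((x ^ 2 + b ^ 2) / 2))) x := by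
  have hsq : HasDerivAt (fun x : ℝ => x ^ 2) (2 * x) x := by simpa using hasDerivAt_pow 2 x
  have hmean : HasDerivAt (fun x : ℝ => (x ^ 2 + b ^ 2) / 2) x x := by
    simpa using (hsq.add_const (b ^ 2)).div_const 2
  have hx2 : x ^ 2 ≠ 0 := pow_ne_zero 2 hx
  have hmean0 : (x ^ 2 + b ^ 2) / 2 ≠ 0 := by positivity
  have := (((hasDerivAt_mul_log hx2).comp (h := fun x => x ^ 2) x hsq).add_const
      (b ^ 2 * log (b ^ 2))).div_const 2
    |>.fun_sub ((hasDerivAt_mul_log hmean0).comp (h := fun x => (x ^ 2 + b ^ 2) / 2) x hmean)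
  exact this.congr_deriv (by ring)

lemma entTwoPoint_sq_le_of_le {a b : ℝ} (hb : 0 ≤ b) (hba : b ≤ a) :
    entTwoPoint ![a ^ 2, b ^ 2] ≤ (a - b) ^ 2 / 2 := by
  set G : ℝ → ℝ := fun x => (x - b) ^ 2 / 2 - entTwoPoint ![x ^ 2, b ^ 2]
  have hG : MonotoneOn G (Set.Ici b) := by
    refine monotoneOn_of_hasDerivWithinAt_nonneg (convex_Ici b)
      (f' := fun x => (x - b) - x * (log (x ^ 2) - log ((x ^ 2 + b ^ 2) / 2)))
      ((by fun_prop : Continuous fun x : ℝ => (x - b) ^ 2 / 2).sub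
        (continuous_entTwoPoint.comp (by fun_prop))).continuousOn
      (fun x hx => ?_) (fun x hx => ?_)
    all_goals
      rw [interior_Ici] at hx
      have hx0 : 0 < x := hb.trans_lt hx
    · have hdist : HasDerivAt (fun x => (x - b) ^ 2 / 2) (x - b) x := by
        simpa using (((hasDerivAt_id x).sub_const b).pow 2).div_const 2
      exact (hdist.sub (hasDerivAt_entTwoPoint_sq b hx0.ne')).hasDerivWithinAt
    · set r := b / x
      have hxr : x * r = b := mul_div_cancel₀ b hx0.ne'
      have hmean : (x ^ 2 + b ^ 2) / 2 = x ^ 2 * ((1 + r ^ 2) / 2) := by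
        rw [← hxr]; ring
      have hlog : r - 1 ≤ log ((1 + r ^ 2) / 2) :=
        sub_one_le_log_one_add_sq_div_two ((div_le_one hx0).2 hx.le)
      rw [hmean, log_mul (by positivity) (by positivity)]
      nlinarith [mul_le_mul_of_nonneg_left hlog hx0.le]
  have := hG Set.self_mem_Ici hba hba
  simp only [G, sub_self, entTwoPoint_const] at this
  linarith

lemma entTwoPoint_sq_le {a b : ℝ} (ha : 0 ≤ a) (hb : 0 ≤ b) :
    entTwoPoint ![a ^ 2, b ^ 2] ≤ (a - b) ^ 2 / 2 := by
  rcases le_total b a with hba | hab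
  · exact entTwoPoint_sq_le_of_le hb hba
  · rw [entTwoPoint_comm, ← neg_sub, neg_sq]
    exact entTwoPoint_sq_le_of_le ha hab

/-- **The two-point logarithmic Sobolev inequality (Bonami–Gross).**
For every `f : {0,1} → ℝ`, with `μ` the uniform measure on `{0,1}`,
`Ent_μ(f²) ≤ (1/2)·|f(0) − f(1)|²`. -/
theorem two_point_log_sobolev (f : Fin 2 → ℝ) :
    entTwoPoint (fun i => f i ^ 2) ≤ (1 / 2) * |f 0 - f 1| ^ 2 := by
  have hf : (fun i => f i ^ 2) = ![|f 0| ^ 2, |f 1| ^ 2] := by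
    ext i; fin_cases i <;> simp
  calc entTwoPoint (fun i => f i ^ 2) ≤ (|f 0| - |f 1|) ^ 2 / 2 :=
        hf ▸ entTwoPoint_sq_le (abs_nonneg _) (abs_nonneg _)
    _ ≤ (1 / 2) * |f 0 - f 1| ^ 2 := by
        rw [← sq_abs (|f 0| - |f 1|), one_div_mul_eq_div]
        gcongr ?_ ^ 2 / 2
        exact abs_abs_sub_abs_le_abs_sub (f 0) (f 1)
end

section
/- (Rossignol) Let a, τ ∈ [0,1] and let f be a nonnegative, nondecreasing function on [0,1] that is constant on [a,1]. Then: (i) if τ ≤ 1/2, ∫_τ^1 (f(x) − f(x−τ))² dx ≤ ∫_0^1 f(x)²·1_{{x ≥ 1−τ}} dx; (ii) if a ≤ τ ≤ 1/2, ∫_τ^1 (f(x) − f(x−τ))² dx ≤ 2a·∫_0^1 f(x)² dx; (iii) if τ ≤ a ≤ 1/2, ∫_τ^1 (f(x) − f(x−τ))² dx ≤ 2τ·∫_0^1 f(x)² dx. -/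
open MeasureTheory intervalIntegral

/-- **Rossignol's lemma.**
Let `a, τ ∈ [0,1]` and let `f` be nonnegative, nondecreasing and square-integrable on
`[0,1]`, constant on `[a,1]`. Then:
(i) if `τ ≤ 1/2`, `∫_τ^1 (f(x) − f(x−τ))² dx ≤ ∫_0^1 f(x)²·1_{x ≥ 1−τ} dx`;
(ii) if `a ≤ τ ≤ 1/2`, `∫_τ^1 (f(x) − f(x−τ))² dx ≤ 2a·∫_0^1 f(x)² dx`;
(iii) if `τ ≤ a ≤ 1/2`, `∫_τ^1 (f(x) − f(x−τ))² dx ≤ 2τ·∫_0^1 f(x)² dx`. -/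
theorem rossignol_shift_lemma
    (a τ : ℝ) (ha : a ∈ Set.Icc (0 : ℝ) 1) (hτ : τ ∈ Set.Icc (0 : ℝ) 1)
    (f : ℝ → ℝ)
    (hf_nonneg : ∀ x ∈ Set.Icc (0 : ℝ) 1, 0 ≤ f x)
    (hf_mono : MonotoneOn f (Set.Icc (0 : ℝ) 1))
    (hf_const : ∀ x ∈ Set.Icc a 1, f x = f a)
    (hf_sq : IntegrableOn (fun x => f x ^ 2) (Set.Icc (0 : ℝ) 1)) :
    (τ ≤ 1 / 2 →
      ∫ x in τ..1, (f x - f (x - τ)) ^ 2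
        ≤ ∫ x in (0 : ℝ)..1, f x ^ 2 * Set.indicator {y : ℝ | 1 - τ ≤ y} 1 x) ∧
    (a ≤ τ → τ ≤ 1 / 2 →
      ∫ x in τ..1, (f x - f (x - τ)) ^ 2 ≤ 2 * a * ∫ x in (0 : ℝ)..1, f x ^ 2) ∧
    (τ ≤ a → a ≤ 1 / 2 →
      ∫ x in τ..1, (f x - f (x - τ)) ^ 2 ≤ 2 * τ * ∫ x in (0 : ℝ)..1, f x ^ 2) := by
  obtain ⟨ha0, ha1⟩ := ha
  obtain ⟨hτ0, hτ1⟩ := hτ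
  set g : ℝ → ℝ := fun x => f (max 0 (min 1 x)) with hg_def
  have hmem : ∀ x : ℝ, max 0 (min 1 x) ∈ Set.Icc (0:ℝ) 1 :=
    fun x => ⟨le_max_left _ _, max_le zero_le_one (min_le_left _ _)⟩
  have hg_mono : Monotone g := fun x y hxy =>
    hf_mono (hmem x) (hmem y) (max_le_max le_rfl (min_le_min le_rfl hxy))
  have hg_meas : Measurable g := hg_mono.measurable
  have hg_eq : ∀ x ∈ Set.Icc (0:ℝ) 1, g x = f x := by
    intro x hx
    simp only [hg_def]
    rw [min_eq_right hx.2, max_eq_right hx.1]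
  have hg_nonneg : ∀ x, 0 ≤ g x := fun x => hf_nonneg _ (hmem x)
  have hgM : ∀ x, g x ≤ f 1 := fun x =>
    hf_mono (hmem x) ⟨zero_le_one, le_refl 1⟩ (hmem x).2
  -- integrability helper
  have hii : ∀ (h : ℝ → ℝ), Measurable h → (∀ x, |h x| ≤ (f 1)^2) →
      ∀ c d : ℝ, IntervalIntegrable h volume c d := by
    intro h hm hb c d
    apply IntervalIntegrable.mono_fun' (g := fun _ => (f 1)^2)
      intervalIntegrable_const hm.aestronglyMeasurable
    filter_upwards with x
    simpa [Real.norm_eq_abs] using hb x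
  have hIsq : ∀ c d : ℝ, IntervalIntegrable (fun x => g x ^ 2) volume c d :=
    hii _ (hg_meas.pow_const 2) (fun x => by
      rw [abs_of_nonneg (sq_nonneg _)]
      exact pow_le_pow_left₀ (hg_nonneg x) (hgM x) 2)
  have hIsh : ∀ c d : ℝ, IntervalIntegrable (fun x => g (x - τ) ^ 2) volume c d :=
    hii _ ((hg_meas.comp (measurable_id.sub_const τ)).pow_const 2) (fun x => by
      rw [abs_of_nonneg (sq_nonneg _)]
      exact pow_le_pow_left₀ (hg_nonneg _) (hgM _) 2)
  have hId : ∀ c d : ℝ,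
      IntervalIntegrable (fun x => (g x - g (x - τ)) ^ 2) volume c d :=
    hii _ ((hg_meas.sub (hg_meas.comp (measurable_id.sub_const τ))).pow_const 2)
      (fun x => by
        rw [abs_of_nonneg (sq_nonneg _)]
        nlinarith [hg_nonneg x, hgM x, hg_nonneg (x - τ), hgM (x - τ)])
  -- key inequality A
  have keyA : τ ≤ 1/2 →
      ∫ x in τ..1, (g x - g (x - τ)) ^ 2 ≤ ∫ x in (1 - τ)..1, g x ^ 2 := by
    intro hτ2
    have h1 : ∫ x in τ..1, (g x - g (x - τ)) ^ 2
        ≤ ∫ x in τ..1, (g x ^ 2 - g (x - τ) ^ 2) := by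
      apply integral_mono_on (by linarith) (hId τ 1) ((hIsq τ 1).sub (hIsh τ 1))
      intro x hx
      have h2 : g (x - τ) ≤ g x := hg_mono (by linarith)
      nlinarith [hg_nonneg (x - τ)]
    have h2 : ∫ x in τ..1, (g x ^ 2 - g (x - τ) ^ 2)
        = (∫ x in τ..1, g x ^ 2) - ∫ x in τ..1, g (x - τ) ^ 2 :=
      integral_sub (hIsq τ 1) (hIsh τ 1)
    have h3 : ∫ x in τ..1, g (x - τ) ^ 2 = ∫ x in (0:ℝ)..(1 - τ), g x ^ 2 := by
      rw [intervalIntegral.integral_comp_sub_right (fun x => g x ^ 2) τ]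
      norm_num
    have h4 : (∫ x in τ..(1 - τ), g x ^ 2) + ∫ x in (1 - τ)..1, g x ^ 2
        = ∫ x in τ..1, g x ^ 2 :=
      integral_add_adjacent_intervals (hIsq _ _) (hIsq _ _)
    have h5 : (∫ x in (0:ℝ)..τ, g x ^ 2) + ∫ x in τ..(1 - τ), g x ^ 2
        = ∫ x in (0:ℝ)..(1 - τ), g x ^ 2 :=
      integral_add_adjacent_intervals (hIsq _ _) (hIsq _ _)
    have h6 : 0 ≤ ∫ x in (0:ℝ)..τ, g x ^ 2 :=
      integral_nonneg hτ0 (fun x _ => sq_nonneg _)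
    linarith
  have hga : ∀ x ∈ Set.Icc a 1, g x = g a := by
    intro x hx
    rw [hg_eq x ⟨le_trans ha0 hx.1, hx.2⟩, hg_eq a ⟨ha0, ha1⟩]
    exact hf_const x hx
  have hlow : (1 - a) * (g a) ^ 2 ≤ ∫ x in (0:ℝ)..1, g x ^ 2 := by
    have h1 : ∫ x in a..1, g x ^ 2 = (1 - a) * (g a) ^ 2 := by
      rw [intervalIntegral.integral_congr (g := fun _ => (g a) ^ 2) ?_]
      · simp [intervalIntegral.integral_const, smul_eq_mul]
      · intro x hx
        rw [Set.uIcc_of_le ha1] at hx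
        simp [hga x hx]
    have h2 : (∫ x in (0:ℝ)..a, g x ^ 2) + ∫ x in a..1, g x ^ 2
        = ∫ x in (0:ℝ)..1, g x ^ 2 :=
      integral_add_adjacent_intervals (hIsq _ _) (hIsq _ _)
    have h3 : 0 ≤ ∫ x in (0:ℝ)..a, g x ^ 2 :=
      integral_nonneg ha0 (fun x _ => sq_nonneg _)
    linarith
  -- transfer from f to g
  have e1 : ∫ x in τ..1, (f x - f (x - τ)) ^ 2
      = ∫ x in τ..1, (g x - g (x - τ)) ^ 2 := by
    apply intervalIntegral.integral_congr
    intro x hx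
    rw [Set.uIcc_of_le hτ1] at hx
    dsimp only
    rw [hg_eq x ⟨le_trans hτ0 hx.1, hx.2⟩,
        hg_eq (x - τ) ⟨by linarith [hx.1], by linarith [hx.2]⟩]
  have e2 : ∫ x in (0:ℝ)..1, f x ^ 2 = ∫ x in (0:ℝ)..1, g x ^ 2 := by
    apply intervalIntegral.integral_congr
    intro x hx
    rw [Set.uIcc_of_le zero_le_one] at hx
    dsimp only
    rw [hg_eq x hx]
  have e3 : ∫ x in (0:ℝ)..1, f x ^ 2 * Set.indicator {y : ℝ | 1 - τ ≤ y} 1 x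
      = ∫ x in (0:ℝ)..1, g x ^ 2 * Set.indicator {y : ℝ | 1 - τ ≤ y} 1 x := by
    apply intervalIntegral.integral_congr
    intro x hx
    rw [Set.uIcc_of_le zero_le_one] at hx
    dsimp only
    rw [hg_eq x hx]
  have eind : τ ≤ 1/2 →
      ∫ x in (0:ℝ)..1, g x ^ 2 * Set.indicator {y : ℝ | 1 - τ ≤ y} 1 x
      = ∫ x in (1 - τ)..1, g x ^ 2 := by
    intro hτ2
    rw [intervalIntegral.integral_of_le (by norm_num : (0:ℝ) ≤ 1),
        intervalIntegral.integral_of_le (by linarith : 1 - τ ≤ 1)]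
    have hfun : (fun x => g x ^ 2 * Set.indicator {y : ℝ | 1 - τ ≤ y} 1 x)
        = Set.indicator {y : ℝ | 1 - τ ≤ y} (fun x => g x ^ 2) := by
      funext x
      by_cases h : 1 - τ ≤ x <;> simp [Set.indicator, h]
    have hms : MeasurableSet {y : ℝ | 1 - τ ≤ y} := measurableSet_le measurable_const measurable_id
    rw [hfun, MeasureTheory.integral_indicator hms, Measure.restrict_restrict hms]
    have hset : {y : ℝ | 1 - τ ≤ y} ∩ Set.Ioc 0 1 = Set.Icc (1 - τ) 1 := by
      ext x
      simp only [Set.mem_inter_iff, Set.mem_setOf_eq, Set.mem_Ioc, Set.mem_Icc]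
      constructor
      · rintro ⟨h1, _, h3⟩; exact ⟨h1, h3⟩
      · rintro ⟨h1, h2⟩; exact ⟨h1, by linarith, h2⟩
    rw [hset, integral_Icc_eq_integral_Ioc]
  refine ⟨?_, ?_, ?_⟩
  · -- (i)
    intro hτ2
    rw [e1, e3, eind hτ2]
    exact keyA hτ2
  · -- (ii)
    intro haτ hτ2
    rw [e1, e2]
    have hsum : (∫ x in τ..(τ + a), (g x - g (x - τ)) ^ 2)
        + ∫ x in (τ + a)..1, (g x - g (x - τ)) ^ 2
        = ∫ x in τ..1, (g x - g (x - τ)) ^ 2 :=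
      integral_add_adjacent_intervals (hId _ _) (hId _ _)
    have hz : ∫ x in (τ + a)..1, (g x - g (x - τ)) ^ 2 = 0 := by
      rw [intervalIntegral.integral_congr (g := fun _ => (0:ℝ)) ?_]
      · simp
      · intro x hx
        rw [Set.uIcc_of_le (by linarith)] at hx
        have e : g x = g a := hga x ⟨by linarith [hx.1], hx.2⟩
        have e' : g (x - τ) = g a := hga (x - τ) ⟨by linarith [hx.1], by linarith [hx.2]⟩
        simp [e, e']
    have hbd : ∫ x in τ..(τ + a), (g x - g (x - τ)) ^ 2 ≤ a * (g a) ^ 2 := by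
      have h1 : ∫ x in τ..(τ + a), (g x - g (x - τ)) ^ 2
          ≤ ∫ x in τ..(τ + a), (g a) ^ 2 := by
        apply integral_mono_on (by linarith) (hId _ _) intervalIntegrable_const
        intro x hx
        have e : g x = g a := hga x ⟨by linarith [hx.1], by linarith [hx.2]⟩
        have h2 : g (x - τ) ≤ g a := by
          rw [← e]; exact hg_mono (by linarith [hx.2])
        rw [e]
        nlinarith [hg_nonneg (x - τ)]
      have h2 : ∫ x in τ..(τ + a), ((g a) ^ 2 : ℝ) = a * (g a) ^ 2 := by
        simp [smul_eq_mul]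
      linarith
    have hfinal : a * (g a) ^ 2 ≤ 2 * a * ∫ x in (0:ℝ)..1, g x ^ 2 := by
      nlinarith [mul_nonneg ha0 (sub_nonneg.mpr hlow),
        mul_nonneg (mul_nonneg ha0 (sq_nonneg (g a))) (by linarith : (0:ℝ) ≤ 1 - 2 * a)]
    linarith
  · -- (iii)
    intro hτa ha2
    have hτ2 : τ ≤ 1/2 := le_trans hτa ha2
    rw [e1, e2]
    have h1 : ∫ x in (1 - τ)..1, g x ^ 2 = τ * (g a) ^ 2 := by
      rw [intervalIntegral.integral_congr (g := fun _ => (g a) ^ 2) ?_]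
      · simp [smul_eq_mul]
      · intro x hx
        rw [Set.uIcc_of_le (by linarith)] at hx
        simp [hga x ⟨by linarith [hx.1], hx.2⟩]
    have hfinal : τ * (g a) ^ 2 ≤ 2 * τ * ∫ x in (0:ℝ)..1, g x ^ 2 := by
      nlinarith [mul_nonneg hτ0 (sub_nonneg.mpr hlow),
        mul_nonneg (mul_nonneg hτ0 (sq_nonneg (g a))) (by linarith : (0:ℝ) ≤ 1 - 2 * a)]
    linarith [keyA hτ2]
end
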